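/- For each k ∈ ℕ, consider a multilayer e-filter setting with null structure on a probability space, with N_k features and M layers, where the group sizes |A_g^(m)| are uniformly bounded over k, m, g and N_k → ∞ (so G_k^(m) → ∞ for every m). Fix original levels α₀^(1),…,α₀^(M) ∈ (0,1) and target levels α^(1),…,α^(M) ∈ (0,1). For each k and m, let R_k^(m) ⊆ [G_k^(m)] be a random rejection set and V̂_k^(m) a nonnegative random variable such that limsup_{k→∞} E[|R_k^(m) ∩ H0,k^(m)| / max(V̂_k^(m), α₀^(m))] ≤ 1. Define e_{g,k}^(m) = G_k^(m)·1{g ∈ R_k^(m)}/max(V̂_k^(m), α₀^(m)) and let S_k be the output of the generalized e-filter at levels α^(1),…,α^(M). Then limsup_{k→∞} FDR_k^(m) ≤ α^(m) for every m ∈ [M]. -/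

import Mathlib

open scoped ENNReal
open Filter MeasureTheory

namespace MultilayerEFilter

variable {N M : ℕ} {G : Fin M → ℕ}

/-- Candidate selection set `S(t) = {j : e_{h(m,j)}^(m) ≥ t^(m) for all m}`. -/
noncomputable def sel (h : (m : Fin M) → Fin N → Fin (G m))
    (e : (m : Fin M) → Fin (G m) → ℝ≥0∞) (t : Fin M → ℝ≥0∞) : Finset (Fin N) :=
  Finset.univ.filter fun j => ∀ m, t m ≤ e m (h m j)

/-- Induced group selection `S^(m) = {g : A_g^(m) ∩ S ≠ ∅}`. -/
noncomputable def selGrp (A : (m : Fin M) → Fin (G m) → Finset (Fin N))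
    (S : Finset (Fin N)) (m : Fin M) : Finset (Fin (G m)) :=
  Finset.univ.filter fun g => ∃ j ∈ A m g, j ∈ S

/-- Estimated FDP at layer `m`: `(G^(m)/t^(m)) / (|S^(m)(t)| ∨ 1)` (with `G/∞ = 0`). -/
noncomputable def FDPhat (A : (m : Fin M) → Fin (G m) → Finset (Fin N))
    (h : (m : Fin M) → Fin N → Fin (G m))
    (e : (m : Fin M) → Fin (G m) → ℝ≥0∞) (t : Fin M → ℝ≥0∞) (m : Fin M) : ℝ≥0∞ :=
  ((G m : ℝ≥0∞) / t m) / ((max (selGrp A (sel h e t) m).card 1 : ℕ) : ℝ≥0∞)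

/-- Admissible threshold vectors. -/
noncomputable def admissible (A : (m : Fin M) → Fin (G m) → Finset (Fin N))
    (h : (m : Fin M) → Fin N → Fin (G m))
    (e : (m : Fin M) → Fin (G m) → ℝ≥0∞) (α : Fin M → ℝ) : Set (Fin M → ℝ≥0∞) :=
  {t | (∀ m, 1 ≤ t m) ∧ ∀ m, FDPhat A h e t m ≤ ENNReal.ofReal (α m)}

/-- Threshold of the generalized e-filter: coordinatewise minimum over admissible vectors. -/
noncomputable def filterThreshold (A : (m : Fin M) → Fin (G m) → Finset (Fin N))
    (h : (m : Fin M) → Fin N → Fin (G m))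
    (e : (m : Fin M) → Fin (G m) → ℝ≥0∞) (α : Fin M → ℝ) (m : Fin M) : ℝ≥0∞ :=
  sInf {s | ∃ t ∈ admissible A h e α, t m = s}

/-- Output of the generalized e-filter. -/
noncomputable def output (A : (m : Fin M) → Fin (G m) → Finset (Fin N))
    (h : (m : Fin M) → Fin N → Fin (G m))
    (e : (m : Fin M) → Fin (G m) → ℝ≥0∞) (α : Fin M → ℝ) : Finset (Fin N) :=
  sel h e (filterThreshold A h e α)

/-- Null groups at layer `m`: groups entirely contained in the null feature set. -/
def nullGrp (A : (m : Fin M) → Fin (G m) → Finset (Fin N))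
    (H0 : Finset (Fin N)) (m : Fin M) : Finset (Fin (G m)) :=
  Finset.univ.filter fun g => A m g ⊆ H0

/-- Layer-`m` false discovery proportion of a selected feature set. -/
noncomputable def FDP (A : (m : Fin M) → Fin (G m) → Finset (Fin N))
    (H0 : Finset (Fin N)) (S : Finset (Fin N)) (m : Fin M) : ℝ≥0∞ :=
  ((selGrp A S m ∩ nullGrp A H0 m).card : ℝ≥0∞) /
    ((max (selGrp A S m).card 1 : ℕ) : ℝ≥0∞)

end MultilayerEFilter

/-!
The filter threshold `t̂` is itself admissible, and every selected group has e-value at least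
`t̂^(m)`. Hence, deterministically, `FDP^(m) ≤ α^(m) · (1/G^(m)) ∑_{g null} e_g^(m)`. For the
one-bit e-values the right-hand side is `α^(m) · |R^(m) ∩ H0^(m)| / max(V̂^(m), α₀^(m))`, so
integrating and passing to the limsup gives the bound.
-/

namespace MultilayerEFilter

section Filter

variable {N M : ℕ} {G : Fin M → ℕ} (A : (m : Fin M) → Fin (G m) → Finset (Fin N))
  (h : (m : Fin M) → Fin N → Fin (G m)) (e : (m : Fin M) → Fin (G m) → ℝ≥0∞)

lemma sel_anti {t t' : Fin M → ℝ≥0∞} (hle : t ≤ t') : sel h e t' ⊆ sel h e t := by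
  intro j hj
  simp only [sel, Finset.mem_filter, Finset.mem_univ, true_and] at hj ⊢
  exact fun m => (hle m).trans (hj m)

lemma selGrp_mono {S S' : Finset (Fin N)} (hS : S ⊆ S') (m : Fin M) :
    selGrp A S m ⊆ selGrp A S' m := by
  intro g hg
  simp only [selGrp, Finset.mem_filter, Finset.mem_univ, true_and] at hg ⊢
  obtain ⟨j, hjA, hjS⟩ := hg
  exact ⟨j, hjA, hS hjS⟩

lemma le_of_mem_selGrp_sel
    (hdisj : ∀ m, ∀ g₁ g₂ : Fin (G m), g₁ ≠ g₂ → Disjoint (A m g₁) (A m g₂))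
    (hmem : ∀ m j, j ∈ A m (h m j)) {t : Fin M → ℝ≥0∞} {m : Fin M} {g : Fin (G m)}
    (hg : g ∈ selGrp A (sel h e t) m) : t m ≤ e m g := by
  simp only [selGrp, sel, Finset.mem_filter, Finset.mem_univ, true_and] at hg
  obtain ⟨j, hjA, hjS⟩ := hg
  obtain rfl : h m j = g := by
    by_contra hne
    exact Finset.disjoint_left.mp (hdisj m _ _ hne) (hmem m j) hjA
  exact hjS m

lemma FDPhat_le_iff {t : Fin M → ℝ≥0∞} {m : Fin M} (ht : 1 ≤ t m) {a : ℝ≥0∞} (ha : a ≠ 0) :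
    FDPhat A h e t m ≤ a ↔
      (G m : ℝ≥0∞) ≤ a * ((max (selGrp A (sel h e t) m).card 1 : ℕ) : ℝ≥0∞) * t m := by
  have hD : ((max (selGrp A (sel h e t) m).card 1 : ℕ) : ℝ≥0∞) ≠ 0 := by positivity
  rw [FDPhat, ENNReal.div_le_iff hD (ENNReal.natCast_ne_top _),
    ENNReal.div_le_iff_le_mul (Or.inl (one_pos.trans_le ht).ne') (Or.inr (mul_ne_zero ha hD))]

lemma one_le_filterThreshold (α : Fin M → ℝ) (m : Fin M) : 1 ≤ filterThreshold A h e α m :=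
  le_sInf <| by
    rintro s ⟨t, ht, rfl⟩
    exact ht.1 m

lemma filterThreshold_le {α : Fin M → ℝ} {t : Fin M → ℝ≥0∞} (ht : t ∈ admissible A h e α) :
    filterThreshold A h e α ≤ t :=
  fun _ => sInf_le ⟨t, ht, rfl⟩

/-- Lowering the other coordinates to their minima only enlarges the selection, hence the
denominator of `FDPhat`, so the minimum threshold is still admissible. -/
lemma FDPhat_filterThreshold_le {α : Fin M → ℝ} {m : Fin M} (hα : 0 < α m) :
    FDPhat A h e (filterThreshold A h e α) m ≤ ENNReal.ofReal (α m) := by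
  set th := filterThreshold A h e α
  set a := ENNReal.ofReal (α m)
  have ha : a ≠ 0 := ENNReal.ofReal_ne_zero_iff.mpr hα
  set c := a * ((max (selGrp A (sel h e th) m).card 1 : ℕ) : ℝ≥0∞)
  have hc : c ≠ 0 := mul_ne_zero ha (by positivity)
  have hc' : c ≠ ∞ := ENNReal.mul_ne_top ENNReal.ofReal_ne_top (ENNReal.natCast_ne_top _)
  have hlow : (G m : ℝ≥0∞) / c ≤ th m := by
    refine le_sInf ?_
    rintro s ⟨t, ht, rfl⟩
    have hsel : selGrp A (sel h e t) m ⊆ selGrp A (sel h e th) m :=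
      selGrp_mono A (sel_anti h e (filterThreshold_le A h e ht)) m
    rw [ENNReal.div_le_iff hc hc', mul_comm]
    calc (G m : ℝ≥0∞)
        ≤ a * ((max (selGrp A (sel h e t) m).card 1 : ℕ) : ℝ≥0∞) * t m :=
          (FDPhat_le_iff A h e (ht.1 m) ha).mp (ht.2 m)
      _ ≤ c * t m := by
          gcongr
          exact mul_le_mul_right (by exact_mod_cast max_le_max (Finset.card_le_card hsel) le_rfl) a
  rw [FDPhat_le_iff A h e (one_le_filterThreshold A h e α m) ha, mul_comm c]
  exact (ENNReal.div_le_iff hc hc').mp hlow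

lemma FDP_output_le
    (hdisj : ∀ m, ∀ g₁ g₂ : Fin (G m), g₁ ≠ g₂ → Disjoint (A m g₁) (A m g₂))
    (hmem : ∀ m j, j ∈ A m (h m j)) (H0 : Finset (Fin N)) {α : Fin M → ℝ} {m : Fin M}
    (hα : 0 < α m) :
    FDP A H0 (output A h e α) m ≤
      ENNReal.ofReal (α m) * (∑ g ∈ nullGrp A H0 m, e m g) / G m := by
  set th := filterThreshold A h e α
  set S := selGrp A (output A h e α) m
  set D : ℝ≥0∞ := ((max S.card 1 : ℕ) : ℝ≥0∞)
  set a := ENNReal.ofReal (α m)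
  set E := ∑ g ∈ nullGrp A H0 m, e m g
  rcases (S ∩ nullGrp A H0 m).eq_empty_or_nonempty with hempty | ⟨g₀, -⟩
  · simp [FDP, S, hempty]
  have hG : (G m : ℝ≥0∞) ≠ 0 := Nat.cast_ne_zero.mpr g₀.pos.ne'
  have hcount : ((S ∩ nullGrp A H0 m).card : ℝ≥0∞) * th m ≤ E :=
    calc ((S ∩ nullGrp A H0 m).card : ℝ≥0∞) * th m = ∑ _g ∈ S ∩ nullGrp A H0 m, th m := by
          rw [Finset.sum_const, nsmul_eq_mul]
      _ ≤ ∑ g ∈ S ∩ nullGrp A H0 m, e m g :=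
          Finset.sum_le_sum fun g hg =>
            le_of_mem_selGrp_sel A h e hdisj hmem (Finset.mem_inter.mp hg).1
      _ ≤ E := Finset.sum_le_sum_of_subset Finset.inter_subset_right
  have hGth : (G m : ℝ≥0∞) ≤ a * D * th m :=
    (FDPhat_le_iff A h e (one_le_filterThreshold A h e α m)
      (ENNReal.ofReal_ne_zero_iff.mpr hα)).mp (FDPhat_filterThreshold_le A h e hα)
  have hD : D ≠ 0 := by positivity
  rw [FDP, ENNReal.div_le_iff hD (ENNReal.natCast_ne_top _), ← ENNReal.mul_div_right_comm,
    ENNReal.le_div_iff_mul_le (Or.inl hG) (Or.inl (ENNReal.natCast_ne_top _))]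
  calc ((S ∩ nullGrp A H0 m).card : ℝ≥0∞) * G m
      ≤ (S ∩ nullGrp A H0 m).card * (a * D * th m) := by gcongr
    _ = a * D * ((S ∩ nullGrp A H0 m).card * th m) := by ring
    _ ≤ a * D * E := by gcongr
    _ = a * E * D := mul_right_comm a D E

end Filter

lemma sum_ofReal_oneBit_div {n : ℕ} (s R : Finset (Fin n)) (v : ℝ) :
    (∑ g ∈ s, ENNReal.ofReal ((n : ℝ) * (if g ∈ R then 1 else 0) / v)) / n =
      ENNReal.ofReal ((R ∩ s).card / v) := by
  rcases n.eq_zero_or_pos with rfl | hn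
  · simp [Subsingleton.elim (R ∩ s) ∅]
  have hterm : ∀ g, ENNReal.ofReal ((n : ℝ) * (if g ∈ R then 1 else 0) / v) =
      if g ∈ R then (n : ℝ≥0∞) * ENNReal.ofReal v⁻¹ else 0 := by
    intro g
    split_ifs <;> simp [div_eq_mul_inv, ENNReal.ofReal_mul]
  simp_rw [hterm, Finset.sum_ite_mem, Finset.sum_const, nsmul_eq_mul, Finset.inter_comm s R]
  rw [← mul_assoc, mul_right_comm,
    ENNReal.mul_div_cancel_right (by positivity) (ENNReal.natCast_ne_top _), div_eq_mul_inv,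
    ENNReal.ofReal_mul (Nat.cast_nonneg _), ENNReal.ofReal_natCast]

lemma limsup_lintegral_le_of_le_const_mul {Ω : ℕ → Type*} [∀ k, MeasurableSpace (Ω k)]
    (P : (k : ℕ) → Measure (Ω k)) {f g : (k : ℕ) → Ω k → ℝ≥0∞} {c : ℝ≥0∞} (hc : c ≠ ∞)
    (hfg : ∀ k ω, f k ω ≤ c * g k ω)
    (hg : limsup (fun k => ∫⁻ ω, g k ω ∂P k) atTop ≤ 1) :
    limsup (fun k => ∫⁻ ω, f k ω ∂P k) atTop ≤ c :=
  calc limsup (fun k => ∫⁻ ω, f k ω ∂P k) atTop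
      ≤ limsup (fun k => c * ∫⁻ ω, g k ω ∂P k) atTop :=
        limsup_le_limsup <| Eventually.of_forall fun k =>
          (lintegral_mono (hfg k)).trans_eq (lintegral_const_mul' _ _ hc)
    _ = c * limsup (fun k => ∫⁻ ω, g k ω ∂P k) atTop := ENNReal.limsup_const_mul_of_ne_top hc
    _ ≤ c * 1 := by gcongr
    _ = c := mul_one c

theorem stmt10_general (M : ℕ) (N : ℕ → ℕ) (G : ℕ → Fin M → ℕ)
    (A : (k : ℕ) → (m : Fin M) → Fin (G k m) → Finset (Fin (N k)))
    (h : (k : ℕ) → (m : Fin M) → Fin (N k) → Fin (G k m))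
    (hdisj : ∀ k m, ∀ g₁ g₂ : Fin (G k m), g₁ ≠ g₂ → Disjoint (A k m g₁) (A k m g₂))
    (hmem : ∀ k m j, j ∈ A k m (h k m j))
    (H0 : (k : ℕ) → Finset (Fin (N k)))
    (Ω : ℕ → Type) [∀ k, MeasurableSpace (Ω k)]
    (P : (k : ℕ) → Measure (Ω k))
    (α₀ α : Fin M → ℝ)
    (hα : ∀ m, α m ∈ Set.Ioo (0 : ℝ) 1)
    (Rej : (k : ℕ) → Ω k → (m : Fin M) → Finset (Fin (G k m)))
    (V : (k : ℕ) → Ω k → Fin M → ℝ)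
    (hE : ∀ m, Filter.limsup (fun k => ∫⁻ ω, ENNReal.ofReal
        (((Rej k ω m ∩ nullGrp (A k) (H0 k) m).card : ℝ) / max (V k ω m) (α₀ m)) ∂ P k)
        Filter.atTop ≤ 1) :
    ∀ m, Filter.limsup (fun k => ∫⁻ ω, FDP (A k) (H0 k)
        (output (A k) (h k) (fun m' g => ENNReal.ofReal
          ((G k m' : ℝ) * (if g ∈ Rej k ω m' then 1 else 0) / max (V k ω m') (α₀ m'))) α)
        m ∂ P k) Filter.atTop ≤ ENNReal.ofReal (α m) := by
  intro m
  refine limsup_lintegral_le_of_le_const_mul P ENNReal.ofReal_ne_top (fun k ω => ?_) (hE m)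
  calc _ ≤ _ := FDP_output_le (A k) (h k) _ (hdisj k) (hmem k) (H0 k) (hα m).1
    _ = _ := by rw [mul_div_assoc, sum_ofReal_oneBit_div]

theorem stmt10 (M : ℕ) (hM : 1 ≤ M) (N : ℕ → ℕ) (G : ℕ → Fin M → ℕ)
    (A : (k : ℕ) → (m : Fin M) → Fin (G k m) → Finset (Fin (N k)))
    (h : (k : ℕ) → (m : Fin M) → Fin (N k) → Fin (G k m))
    (hne : ∀ k m g, (A k m g).Nonempty)
    (hdisj : ∀ k m, ∀ g₁ g₂ : Fin (G k m), g₁ ≠ g₂ → Disjoint (A k m g₁) (A k m g₂))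
    (hmem : ∀ k m j, j ∈ A k m (h k m j))
    (hbdd : ∃ C : ℕ, ∀ k m g, (A k m g).card ≤ C)
    (hN : Filter.Tendsto N Filter.atTop Filter.atTop)
    (H0 : (k : ℕ) → Finset (Fin (N k)))
    (Ω : ℕ → Type) [∀ k, MeasurableSpace (Ω k)]
    (P : (k : ℕ) → Measure (Ω k)) [∀ k, IsProbabilityMeasure (P k)]
    (α₀ α : Fin M → ℝ)
    (hα₀ : ∀ m, α₀ m ∈ Set.Ioo (0 : ℝ) 1) (hα : ∀ m, α m ∈ Set.Ioo (0 : ℝ) 1)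
    (Rej : (k : ℕ) → Ω k → (m : Fin M) → Finset (Fin (G k m)))
    (V : (k : ℕ) → Ω k → Fin M → ℝ) (hV : ∀ k ω m, 0 ≤ V k ω m)
    (hmeasR : ∀ k m (g : Fin (G k m)), MeasurableSet {ω | g ∈ Rej k ω m})
    (hmeasV : ∀ k m, Measurable fun ω => V k ω m)
    (hE : ∀ m, Filter.limsup (fun k => ∫⁻ ω, ENNReal.ofReal
        (((Rej k ω m ∩ nullGrp (A k) (H0 k) m).card : ℝ) / max (V k ω m) (α₀ m)) ∂ P k)
        Filter.atTop ≤ 1) :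
    ∀ m, Filter.limsup (fun k => ∫⁻ ω, FDP (A k) (H0 k)
        (output (A k) (h k) (fun m' g => ENNReal.ofReal
          ((G k m' : ℝ) * (if g ∈ Rej k ω m' then 1 else 0) / max (V k ω m') (α₀ m'))) α)
        m ∂ P k) Filter.atTop ≤ ENNReal.ofReal (α m) :=
  stmt10_general M N G A h hdisj hmem H0 Ω P α₀ α hα Rej V hE

end MultilayerEFilter
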